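/- Every distribution with consistently varying tail is infinite-order long-tailed: if a nonnegative random variable X satisfies lim_{v↓1} liminf_{x→∞} P(X > vx)/P(X > x) = 1 (and P(X > x) > 0 for all x ≥ 0), then for every 0 < θ ≤ 1 the random variable X^θ is long-tailed, i.e., 𝓒 ⊆ 𝓛^∞. -/

import Mathlib

open MeasureTheory Filter Set ProbabilityTheory Real

/-- The tail probability `P(X > x)` as a real number. -/
noncomputable def tailP {Ω : Type*} [MeasurableSpace Ω] (μ : Measure Ω) (X : Ω → ℝ) (x : ℝ) : ℝ :=
  (μ {ω | x < X ω}).toReal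

/-- A nonnegative random variable `X` is long-tailed if `P(X > x) > 0` for all `x ≥ 0` and
`P(X > x + y) / P(X > x) → 1` as `x → ∞` for all `y > 0`. -/
def LongTailed {Ω : Type*} [MeasurableSpace Ω] (μ : Measure Ω) (X : Ω → ℝ) : Prop :=
  (∀ x ≥ 0, 0 < tailP μ X x) ∧
  ∀ y > 0, Tendsto (fun x => tailP μ X (x + y) / tailP μ X x) atTop (nhds 1)

open Topology

/-!
Write `F = P(X > ·)`. Since `P(X^θ > x) = F(x^{1/θ})`, the long-tail ratio of `X^θ` is
`F((x + y)^{1/θ}) / F(x^{1/θ})`, which is at most `1` by monotonicity. Conversely, for every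
`v > 1` we eventually have `(x + y)^{1/θ} ≤ v x^{1/θ}`, so the ratio is at least
`F(v t) / F(t)` with `t = x^{1/θ} → ∞`; consistent variation makes the liminf of the latter
as close to `1` as we like by taking `v` close to `1`.
-/

lemma eventually_rpow_add_le_mul_rpow {p v : ℝ} (hp : 0 < p) (hv : 1 < v) (y : ℝ) :
    ∀ᶠ x in atTop, (x + y) ^ p ≤ v * x ^ p := by
  set w := v ^ (1 / p)
  have hw : 1 < w := one_lt_rpow hv (by positivity)
  filter_upwards [eventually_ge_atTop 0, eventually_ge_atTop (-y),
    eventually_ge_atTop (y / (w - 1))] with x hx0 hxy0 hxw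
  have hxy : x + y ≤ w * x := by
    have : y ≤ (w - 1) * x := (div_le_iff₀' (by linarith)).mp hxw
    linarith
  calc (x + y) ^ p ≤ (w * x) ^ p := rpow_le_rpow (by linarith) hxy hp.le
    _ = v * x ^ p := by
        rw [mul_rpow (by positivity) hx0, ← rpow_mul (by linarith), one_div_mul_cancel hp.ne',
          rpow_one]

section Tail

variable {Ω : Type*} [MeasurableSpace Ω] (μ : Measure Ω) (X : Ω → ℝ)

lemma tailP_nonneg (x : ℝ) : 0 ≤ tailP μ X x := ENNReal.toReal_nonneg

lemma tailP_antitone [IsFiniteMeasure μ] : Antitone (tailP μ X) :=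
  fun _ _ hab => ENNReal.toReal_mono (measure_ne_top μ _)
    (measure_mono fun _ h => lt_of_le_of_lt hab h)

lemma tailP_rpow {X : Ω → ℝ} (hX : ∀ ω, 0 ≤ X ω) {θ : ℝ} (hθ : 0 < θ) {x : ℝ} (hx : 0 ≤ x) :
    tailP μ (fun ω => X ω ^ θ) x = tailP μ X (x ^ (1 / θ)) := by
  have hx' : (x ^ (1 / θ)) ^ θ = x := by rw [one_div, rpow_inv_rpow hx hθ.ne']
  unfold tailP
  congr 2
  ext ω
  rw [mem_ofPred_eq, mem_ofPred_eq, ← rpow_lt_rpow_iff (rpow_nonneg hx _) (hX ω) hθ, hx']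

lemma tailP_rpow_pos {X : Ω → ℝ} (hX : ∀ ω, 0 ≤ X ω) (hpos : ∀ x ≥ 0, 0 < tailP μ X x)
    {θ : ℝ} (hθ : 0 < θ) {x : ℝ} (hx : 0 ≤ x) : 0 < tailP μ (fun ω => X ω ^ θ) x := by
  rw [tailP_rpow μ hX hθ hx]
  exact hpos _ (rpow_nonneg hx _)

lemma exists_eventually_lt_tailP_mul_div
    (hC : Tendsto (fun v => liminf (fun x => tailP μ X (v * x) / tailP μ X x) atTop)
      (𝓝[>] 1) (𝓝 1)) {a : ℝ} (ha : a < 1) :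
    ∃ v, 1 < v ∧ ∀ᶠ t in atTop, a < tailP μ X (v * t) / tailP μ X t := by
  obtain ⟨v, hav, hv⟩ := ((hC.eventually (eventually_gt_nhds ha)).and self_mem_nhdsWithin).exists
  refine ⟨v, hv, eventually_lt_of_lt_liminf hav ?_⟩
  exact isBoundedUnder_of ⟨0, fun x => div_nonneg (tailP_nonneg μ X _) (tailP_nonneg μ X _)⟩

lemma tendsto_tailP_rpow_add_div [IsFiniteMeasure μ] {X : Ω → ℝ} (hX : ∀ ω, 0 ≤ X ω)
    (hpos : ∀ x ≥ 0, 0 < tailP μ X x)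
    (hC : Tendsto (fun v => liminf (fun x => tailP μ X (v * x) / tailP μ X x) atTop)
      (𝓝[>] 1) (𝓝 1)) {θ : ℝ} (hθ : 0 < θ) {y : ℝ} (hy : 0 ≤ y) :
    Tendsto (fun x => tailP μ (fun ω => X ω ^ θ) (x + y) / tailP μ (fun ω => X ω ^ θ) x)
      atTop (𝓝 1) := by
  refine tendsto_order.2 ⟨fun a ha => ?_, fun a ha => ?_⟩
  · obtain ⟨v, hv, hratio⟩ := exists_eventually_lt_tailP_mul_div μ X hC ha
    have hratio' := (tendsto_rpow_atTop (one_div_pos.2 hθ)).eventually hratio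
    filter_upwards [hratio', eventually_rpow_add_le_mul_rpow (one_div_pos.2 hθ) hv y,
      eventually_ge_atTop 0] with x hax hle hx
    rw [tailP_rpow μ hX hθ (by linarith), tailP_rpow μ hX hθ hx]
    exact hax.trans_le <| div_le_div_of_nonneg_right (tailP_antitone μ X hle)
      (tailP_nonneg μ X _)
  · filter_upwards [eventually_ge_atTop 0] with x hx
    exact lt_of_le_of_lt (div_le_one_of_le₀ (tailP_antitone μ _ (by linarith))
      (tailP_rpow_pos μ hX hpos hθ hx).le) ha

end Tail

/-- Every distribution with a consistently varying tail is infinite-order long-tailed: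
if `lim_{v↓1} liminf_{x→∞} P(X > vx)/P(X > x) = 1`, then `X^θ` is long-tailed for all
`0 < θ ≤ 1`, i.e. `𝓒 ⊆ 𝓛^∞`. -/
theorem stmt4 {Ω : Type*} [MeasurableSpace Ω] (μ : Measure Ω) [IsProbabilityMeasure μ]
    (X : Ω → ℝ) (hX : ∀ ω, 0 ≤ X ω)
    (hpos : ∀ x ≥ 0, 0 < tailP μ X x)
    (hC : Tendsto (fun v => Filter.liminf (fun x => tailP μ X (v * x) / tailP μ X x) atTop)
      (nhdsWithin 1 (Set.Ioi 1)) (nhds 1)) :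
    ∀ θ : ℝ, 0 < θ → θ ≤ 1 → LongTailed μ (fun ω => X ω ^ θ) := by
  intro θ hθ _
  exact ⟨fun x hx => tailP_rpow_pos μ hX hpos hθ hx,
    fun y hy => tendsto_tailP_rpow_add_div μ hX hpos hC hθ hy.le⟩
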